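/- For the discounted problem with discount factor 0 ≤ β < 1: if u : S → ℝ is bounded and satisfies u(s) ≥ ∫ (r(s,a,s') + β u(s')) dq(s'|s,a) for all s, a, then I_β(π)(s) ≤ u(s) for every plan π and state s. -/

import Mathlib

open MeasureTheory

/-- Finite-horizon expected β-discounted return of a (history-dependent, randomized) plan
`π : List S → Measure A` given the history `h` (most recent state first). -/
noncomputable def finValDisc {S A : Type*} [MeasurableSpace S] [MeasurableSpace A] [Inhabited S]
    (q : S → A → Measure S) (r : S → A → S → ℝ) (β : ℝ)
    (π : List S → Measure A) : ℕ → List S → ℝ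
  | 0, _ => 0
  | n + 1, h =>
      ∫ a, ∫ y, (r h.headI a y + β * finValDisc q r β π n (y :: h)) ∂(q h.headI a) ∂(π h)

/-- Total expected β-discounted return `I_β(π)(s)`; for nonnegative rewards it is the
supremum of the finite-horizon discounted returns. -/
noncomputable def discReturn {S A : Type*} [MeasurableSpace S] [MeasurableSpace A] [Inhabited S]
    (q : S → A → Measure S) (r : S → A → S → ℝ) (β : ℝ)
    (π : List S → Measure A) (s : S) : ℝ :=
  ⨆ n : ℕ, finValDisc q r β π n [s]

/-!
Since rewards are nonnegative, every finite-horizon return is nonnegative, and so is `u`: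
with `m = inf u`, excessivity gives `β m ≤ u`, hence `β m ≤ m` and `m ≥ 0` as `β < 1`.
Induction on the horizon then shows that the `n`-day return from any history is at most `u`
of the current state: one more day replaces the continuation value by something at most `u`,
and the excessivity inequality closes the step. Taking the supremum over `n` gives the bound.
-/

open Set

lemma nonneg_of_mul_iInf_le {ι : Type*} {u : ι → ℝ} (hu : BddBelow (range u)) {β : ℝ}
    (hβ : β < 1) (h : ∀ i, β * ⨅ j, u j ≤ u i) (i : ι) : 0 ≤ u i := by
  have : Nonempty ι := ⟨i⟩
  have hm : β * ⨅ j, u j ≤ ⨅ j, u j := le_ciInf h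
  have hm0 : 0 ≤ ⨅ j, u j := by nlinarith
  exact hm0.trans (ciInf_le hu i)

section Discounted

variable {S A : Type*} [MeasurableSpace S]
  {q : S → A → Measure S} {r : S → A → S → ℝ} {β : ℝ} {u : S → ℝ}

lemma nonneg_of_excessive [Nonempty A] (hq : ∀ s a, IsProbabilityMeasure (q s a))
    (hr0 : ∀ s a y, 0 ≤ r s a y) (hβ0 : 0 ≤ β) (hβ1 : β < 1) (hu : BddBelow (range u))
    (hint : ∀ s a, Integrable (fun y ↦ r s a y + β * u y) (q s a))
    (hexc : ∀ s a, ∫ y, (r s a y + β * u y) ∂(q s a) ≤ u s) (s : S) : 0 ≤ u s := by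
  refine nonneg_of_mul_iInf_le hu hβ1 (fun t ↦ ?_) s
  obtain ⟨a⟩ := ‹Nonempty A›
  calc β * ⨅ j, u j = ∫ _, β * ⨅ j, u j ∂(q t a) := by simp
    _ ≤ ∫ y, (r t a y + β * u y) ∂(q t a) :=
        integral_mono (integrable_const _) (hint t a) fun y ↦ by
          have := mul_le_mul_of_nonneg_left (ciInf_le hu y) hβ0
          linarith [hr0 t a y]
    _ ≤ u t := hexc t a

variable [MeasurableSpace A] [Inhabited S]

lemma finValDisc_nonneg (hr0 : ∀ s a y, 0 ≤ r s a y) (hβ0 : 0 ≤ β)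
    (π : List S → Measure A) (n : ℕ) (h : List S) : 0 ≤ finValDisc q r β π n h := by
  induction n generalizing h with
  | zero => simp [finValDisc]
  | succ n ih =>
    exact integral_nonneg fun _ ↦ integral_nonneg fun _ ↦
      add_nonneg (hr0 _ _ _) (mul_nonneg hβ0 (ih _))

lemma finValDisc_le_of_excessive {π : List S → Measure A}
    (hπ : ∀ h, IsProbabilityMeasure (π h)) (hr0 : ∀ s a y, 0 ≤ r s a y) (hβ0 : 0 ≤ β)
    (hu0 : ∀ s, 0 ≤ u s) (hint : ∀ s a, Integrable (fun y ↦ r s a y + β * u y) (q s a))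
    (hexc : ∀ s a, ∫ y, (r s a y + β * u y) ∂(q s a) ≤ u s) (n : ℕ) (h : List S) :
    finValDisc q r β π n h ≤ u h.headI := by
  induction n generalizing h with
  | zero => simpa [finValDisc] using hu0 h.headI
  | succ n ih =>
    have hpos : ∀ a y, 0 ≤ r h.headI a y + β * finValDisc q r β π n (y :: h) := fun _ _ ↦
      add_nonneg (hr0 _ _ _) (mul_nonneg hβ0 (finValDisc_nonneg hr0 hβ0 π n _))
    -- The integrals below need not exist; nonnegativity makes the comparison valid anyway.
    have hstep : ∀ a, ∫ y, (r h.headI a y + β * finValDisc q r β π n (y :: h)) ∂(q h.headI a)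
        ≤ u h.headI := fun a ↦
      (integral_mono_of_nonneg (ae_of_all _ (hpos a)) (hint _ a) (ae_of_all _ fun y ↦ by
        have := mul_le_mul_of_nonneg_left (ih (y :: h)) hβ0
        simp only [List.headI_cons] at this
        linarith)).trans (hexc _ a)
    have := hπ h
    rw [finValDisc]
    calc _ ≤ ∫ _, u h.headI ∂(π h) :=
          integral_mono_of_nonneg (ae_of_all _ fun a ↦ integral_nonneg (hpos a))
            (integrable_const _) (ae_of_all _ hstep)
      _ = u h.headI := by simp

end Discounted

/-- Result (II) of Blackwell's discounted paper: a bounded `β`-excessive function `u`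
is an upper bound on the discounted income of every plan. -/
theorem discounted_excessive_bounds_income {S A : Type*}
    [MeasurableSpace S] [MeasurableSpace A] [Inhabited S]
    (q : S → A → Measure S) (hq : ∀ s a, IsProbabilityMeasure (q s a))
    (r : S → A → S → ℝ) (M : ℝ) (hr0 : ∀ s a y, 0 ≤ r s a y) (hrM : ∀ s a y, r s a y ≤ M)
    (hrm : ∀ s a, Measurable (r s a))
    (β : ℝ) (hβ0 : 0 ≤ β) (hβ1 : β < 1)
    (u : S → ℝ) (C : ℝ) (huC : ∀ s, |u s| ≤ C) (hum : Measurable u)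
    (hexc : ∀ s a, ∫ y, (r s a y + β * u y) ∂(q s a) ≤ u s) :
    ∀ (π : List S → Measure A), (∀ h, IsProbabilityMeasure (π h)) →
      ∀ s : S, discReturn q r β π s ≤ u s := by
  intro π hπ s
  have : Nonempty A := nonempty_of_isProbabilityMeasure (π [])
  have hbdd : BddBelow (range u) :=
    ⟨-C, by rintro _ ⟨t, rfl⟩; exact (abs_le.mp (huC t)).1⟩
  have hint : ∀ s a, Integrable (fun y ↦ r s a y + β * u y) (q s a) := fun s a ↦
    have := hq s a
    (Integrable.of_bound (hrm s a).aestronglyMeasurable M (ae_of_all _ fun y ↦ by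
        rw [Real.norm_of_nonneg (hr0 s a y)]; exact hrM s a y)).add
      ((Integrable.of_bound hum.aestronglyMeasurable C (ae_of_all _ huC)).const_mul β)
  have hu0 := nonneg_of_excessive hq hr0 hβ0 hβ1 hbdd hint hexc
  exact ciSup_le fun n ↦ finValDisc_le_of_excessive hπ hr0 hβ0 hu0 hint hexc n [s]
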